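/- If f solves f''' + ((m+1)/2) f f'' - m (f')² = 0 on [α,β], then ½(f''(β))² - ½(f''(α))² - (m/3)(f'(β))³ + (m/3)(f'(α))³ = -((m+1)/2) ∫_α^β f(t) (f''(t))² dt. -/

import Mathlib

/-! Multiplying the equation by `f''` turns it into
`(½ f''² - (m/3) f'³)' = -((m+1)/2) f f''²`, so the identity is the fundamental theorem of
calculus applied to `½ f''² - (m/3) f'³`. -/

open Real Set Filter Topology MeasureTheory

theorem intervalIntegral.integral_eq_sub_of_hasDerivWithinAt_Icc {E : Type*}
    [NormedAddCommGroup E] [NormedSpace ℝ E] [CompleteSpace E] {a b : ℝ} (hab : a ≤ b)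
    {g g' : ℝ → E} (hg : ∀ t ∈ Icc a b, HasDerivWithinAt g (g' t) (Icc a b) t)
    (hint : IntervalIntegrable g' volume a b) :
    ∫ t in a..b, g' t = g b - g a :=
  integral_eq_sub_of_hasDerivAt_of_le hab (HasDerivWithinAt.continuousOn hg)
    (fun t ht ↦ (hg t (Ioo_subset_Icc_self ht)).hasDerivAt (Icc_mem_nhds ht.1 ht.2)) hint

noncomputable def falknerSkanEnergy (m : ℝ) (f' f'' : ℝ → ℝ) (t : ℝ) : ℝ :=
  1 / 2 * f'' t ^ 2 - m / 3 * f' t ^ 3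

theorem hasDerivWithinAt_falknerSkanEnergy {m t : ℝ} {s : Set ℝ} {f f' f'' f''' : ℝ → ℝ}
    (hf' : HasDerivWithinAt f' (f'' t) s t) (hf'' : HasDerivWithinAt f'' (f''' t) s t)
    (hode : f''' t + (m + 1) / 2 * f t * f'' t - m * f' t ^ 2 = 0) :
    HasDerivWithinAt (falknerSkanEnergy m f' f'') (-((m + 1) / 2) * (f t * f'' t ^ 2)) s t := by
  have h := ((hf''.fun_pow 2).const_mul (1 / 2)).fun_sub ((hf'.fun_pow 3).const_mul (m / 3))
  refine h.congr_deriv ?_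
  linear_combination f'' t * hode

theorem stmt8_general (m α β : ℝ) (hab : α ≤ β) (f f' f'' f''' : ℝ → ℝ)
    (hf : ∀ t ∈ Set.Icc α β, HasDerivWithinAt f (f' t) (Set.Icc α β) t)
    (hf' : ∀ t ∈ Set.Icc α β, HasDerivWithinAt f' (f'' t) (Set.Icc α β) t)
    (hf'' : ∀ t ∈ Set.Icc α β, HasDerivWithinAt f'' (f''' t) (Set.Icc α β) t)
    (hode : ∀ t ∈ Set.Icc α β,
      f''' t + (m + 1) / 2 * f t * f'' t - m * (f' t) ^ 2 = 0) :
    1 / 2 * (f'' β) ^ 2 - 1 / 2 * (f'' α) ^ 2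
      - m / 3 * (f' β) ^ 3 + m / 3 * (f' α) ^ 3
      = -((m + 1) / 2) * ∫ t in α..β, f t * (f'' t) ^ 2 := by
  have hint : IntervalIntegrable (fun t ↦ -((m + 1) / 2) * (f t * f'' t ^ 2)) volume α β := by
    refine ContinuousOn.intervalIntegrable_of_Icc hab ?_
    exact continuousOn_const.mul ((HasDerivWithinAt.continuousOn hf).mul
      ((HasDerivWithinAt.continuousOn hf'').pow 2))
  have hftc := intervalIntegral.integral_eq_sub_of_hasDerivWithinAt_Icc hab
    (fun t ht ↦ hasDerivWithinAt_falknerSkanEnergy (hf' t ht) (hf'' t ht) (hode t ht)) hint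
  rw [intervalIntegral.integral_const_mul] at hftc
  rw [hftc, falknerSkanEnergy, falknerSkanEnergy]
  ring

theorem stmt8 (m α β : ℝ) (hab : α ≤ β) (f f' f'' f''' : ℝ → ℝ)
    (hf : ∀ t ∈ Set.Icc α β, HasDerivWithinAt f (f' t) (Set.Icc α β) t)
    (hf' : ∀ t ∈ Set.Icc α β, HasDerivWithinAt f' (f'' t) (Set.Icc α β) t)
    (hf'' : ∀ t ∈ Set.Icc α β, HasDerivWithinAt f'' (f''' t) (Set.Icc α β) t)
    (hcont : ContinuousOn f''' (Set.Icc α β))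
    (hode : ∀ t ∈ Set.Icc α β,
      f''' t + (m + 1) / 2 * f t * f'' t - m * (f' t) ^ 2 = 0) :
    1 / 2 * (f'' β) ^ 2 - 1 / 2 * (f'' α) ^ 2
      - m / 3 * (f' β) ^ 3 + m / 3 * (f' α) ^ 3
      = -((m + 1) / 2) * ∫ t in α..β, f t * (f'' t) ^ 2 :=
  stmt8_general m α β hab f f' f'' f''' hf hf' hf'' hode
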